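/- With g as the inverse of G(t) = k(t) + t² (k convex, strictly increasing, continuous, k(0)=0), the function ρ(x, x̄) = max{‖x‖, g(|x̄|)} on H(1) satisfies ρ(p·q) ≤ ρ(p) + ρ(q) for all p, q ∈ H(1), and ρ(p) = 0 iff p = (0,0); hence ρ(p,q) := ρ(p⁻¹·q) is a left-invariant distance on H(1). (Kirchheim–Magnani, Theorem 2.1, existence part) -/

import Mathlib

/-!
Since `g` inverts the strictly increasing `G t = k t + t²` on `[0, ∞)`, for `r ≥ 0` we have
`ρ₀(x, x̄) ≤ r ↔ ‖x‖ ≤ r ∧ |x̄| ≤ G r`. For the product `(x + y, x̄ + ȳ + 2ω(x, y))`, with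
`α = ρ₀(p)` and `β = ρ₀(q)`, the horizontal part is the triangle inequality, and the vertical part is
`|x̄ + ȳ + 2ω(x, y)| ≤ G α + G β + 2αβ ≤ G (α + β)`, using `|ω(x, y)| ≤ ‖x‖‖y‖` and the
superadditivity `k α + k β ≤ k (α + β)` of a convex function vanishing at `0`.
-/

/-- The Heisenberg group H(1) as a set: ℝ² × ℝ. -/
abbrev H : Type := (ℝ × ℝ) × ℝ

/-- Euclidean norm on ℝ². -/
noncomputable def enorm2 (x : ℝ × ℝ) : ℝ := Real.sqrt (x.1 ^ 2 + x.2 ^ 2)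

/-- Canonical symplectic form on ℝ². -/
def omega2 (x y : ℝ × ℝ) : ℝ := x.1 * y.2 - x.2 * y.1

/-- Heisenberg group operation. -/
def Hmul (p q : H) : H :=
  ((p.1.1 + q.1.1, p.1.2 + q.1.2), p.2 + q.2 + 2 * omega2 p.1 q.1)

/-- Heisenberg group inverse. -/
def Hinv (p : H) : H := ((-p.1.1, -p.1.2), -p.2)

/-- Neutral element. -/
def He : H := ((0, 0), 0)

/-- The gauge d₀(x,x̄) = max {‖x‖, √|x̄|}. -/
noncomputable def d0 (p : H) : ℝ := max (enorm2 p.1) (Real.sqrt |p.2|)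
/-- The function G(t) = k(t) + t², whose inverse is g. -/
def Ginv (k : ℝ → ℝ) (t : ℝ) : ℝ := k t + t ^ 2

/-- The gauge ρ₀(x,x̄) = max {‖x‖, g(|x̄|)}. -/
noncomputable def rho0 (g : ℝ → ℝ) (p : H) : ℝ := max (enorm2 p.1) (g |p.2|)

/-- The dilatations δ̄_ε(x,x̄) = (εx, sgn(x̄)·g⁻¹(ε·g(|x̄|))). -/
noncomputable def bdil (k g : ℝ → ℝ) (ε : ℝ) (p : H) : H :=
  ((ε * p.1.1, ε * p.1.2), Real.sign p.2 * Ginv k (ε * g |p.2|))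

/-- The usual anisotropic dilations δ_ε(x,x̄) = (εx, ε²x̄). -/
def hdil (ε : ℝ) (p : H) : H := ((ε * p.1.1, ε * p.1.2), ε ^ 2 * p.2)

open Set

theorem StrictMonoOn.rightInv_le_iff {α β : Type*} [LinearOrder α] [Preorder β] {f : α → β}
    {g : β → α} {s : Set α} (hf : StrictMonoOn f s) {t : β} {r : α} (hgt : g t ∈ s)
    (hfg : f (g t) = t) (hr : r ∈ s) : g t ≤ r ↔ t ≤ f r := by
  rw [← hf.le_iff_le hgt hr, hfg]

theorem ConvexOn.le_mul_of_map_zero {f : ℝ → ℝ} (hf : ConvexOn ℝ (Ici 0) f) (h0 : f 0 = 0)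
    {θ x : ℝ} (hθ₀ : 0 ≤ θ) (hθ₁ : θ ≤ 1) (hx : 0 ≤ x) : f (θ * x) ≤ θ * f x := by
  simpa [h0] using hf.2 (mem_Ici.2 le_rfl) (mem_Ici.2 hx) (sub_nonneg.2 hθ₁) hθ₀ (by ring)

theorem ConvexOn.add_le_of_map_zero {f : ℝ → ℝ} (hf : ConvexOn ℝ (Ici 0) f) (h0 : f 0 = 0)
    {a b : ℝ} (ha : 0 ≤ a) (hb : 0 ≤ b) : f a + f b ≤ f (a + b) := by
  rcases (add_nonneg ha hb).eq_or_lt with hs | hs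
  · obtain ⟨rfl, rfl⟩ : a = 0 ∧ b = 0 := ⟨by linarith, by linarith⟩
    simp [h0]
  have hle (c : ℝ) (hc : 0 ≤ c) (hcs : c ≤ a + b) : f c ≤ c / (a + b) * f (a + b) := by
    simpa [div_mul_cancel₀ c hs.ne'] using
      hf.le_mul_of_map_zero h0 (div_nonneg hc hs.le) ((div_le_one hs).2 hcs) hs.le
  calc f a + f b ≤ a / (a + b) * f (a + b) + b / (a + b) * f (a + b) :=
        add_le_add (hle a ha (by linarith)) (hle b hb (by linarith))
    _ = f (a + b) := by rw [← add_mul, ← add_div, div_self hs.ne', one_mul]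

theorem enorm2_eq_norm (x : ℝ × ℝ) : enorm2 x = ‖(⟨x.1, x.2⟩ : ℂ)‖ := by
  rw [Complex.norm_eq_sqrt_sq_add_sq, enorm2]

theorem enorm2_nonneg (x : ℝ × ℝ) : 0 ≤ enorm2 x := Real.sqrt_nonneg _

theorem enorm2_add_le (x y : ℝ × ℝ) : enorm2 (x + y) ≤ enorm2 x + enorm2 y := by
  simp only [enorm2_eq_norm]
  exact norm_add_le (⟨x.1, x.2⟩ : ℂ) ⟨y.1, y.2⟩

theorem enorm2_le_zero_iff (x : ℝ × ℝ) : enorm2 x ≤ 0 ↔ x = 0 := by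
  rw [enorm2_eq_norm, norm_le_zero_iff, Complex.ext_iff, Prod.ext_iff]
  rfl

theorem abs_omega2_le (x y : ℝ × ℝ) : |omega2 x y| ≤ enorm2 x * enorm2 y := by
  have h : omega2 x y = (star (⟨x.1, x.2⟩ : ℂ) * ⟨y.1, y.2⟩).im := by
    simp only [omega2, RCLike.star_def, Complex.mul_im, Complex.conj_re, Complex.conj_im]
    ring
  rw [h, enorm2_eq_norm, enorm2_eq_norm, ← Complex.norm_conj, ← Complex.norm_mul]
  exact Complex.abs_im_le_norm _

theorem abs_Hmul_snd_le (p q : H) :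
    |(Hmul p q).2| ≤ |p.2| + |q.2| + 2 * (enorm2 p.1 * enorm2 q.1) := by
  calc |p.2 + q.2 + 2 * omega2 p.1 q.1| ≤ |p.2| + |q.2| + |2 * omega2 p.1 q.1| :=
        abs_add_three _ _ _
    _ ≤ |p.2| + |q.2| + 2 * (enorm2 p.1 * enorm2 q.1) := by
        rw [abs_mul, abs_two]; gcongr; exact abs_omega2_le _ _

theorem Hinv_Hmul_Hmul_left (r p q : H) :
    Hmul (Hinv (Hmul r p)) (Hmul r q) = Hmul (Hinv p) q := by
  simp only [Hmul, Hinv, omega2, Prod.mk.injEq]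
  refine ⟨⟨?_, ?_⟩, ?_⟩ <;> ring

section Gauge

variable {k g : ℝ → ℝ}

theorem Ginv_strictMonoOn (hk : StrictMonoOn k (Ici 0)) : StrictMonoOn (Ginv k) (Ici 0) :=
  hk.add (pow_left_strictMonoOn₀ two_ne_zero)

theorem Ginv_zero (hk0 : k 0 = 0) : Ginv k 0 = 0 := by simp [Ginv, hk0]

theorem Ginv_add_add_le (hk_conv : ConvexOn ℝ (Ici 0) k) (hk0 : k 0 = 0) {a b : ℝ}
    (ha : 0 ≤ a) (hb : 0 ≤ b) : Ginv k a + Ginv k b + 2 * (a * b) ≤ Ginv k (a + b) := by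
  have := hk_conv.add_le_of_map_zero hk0 ha hb
  simp only [Ginv]
  nlinarith

theorem rho0_nonneg (p : H) : 0 ≤ rho0 g p := (enorm2_nonneg _).trans (le_max_left _ _)

theorem rho0_le_iff (hk : StrictMonoOn k (Ici 0))
    (hg : ∀ t ∈ Ici (0 : ℝ), 0 ≤ g t ∧ Ginv k (g t) = t) {p : H} {r : ℝ} (hr : 0 ≤ r) :
    rho0 g p ≤ r ↔ enorm2 p.1 ≤ r ∧ |p.2| ≤ Ginv k r := by
  obtain ⟨hg₀, hGg⟩ := hg |p.2| (mem_Ici.2 (abs_nonneg _))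
  rw [rho0, max_le_iff, (Ginv_strictMonoOn hk).rightInv_le_iff hg₀ hGg hr]

end Gauge

theorem rho0_gauge_general
(k g : ℝ → ℝ)
    (hk_conv : ConvexOn ℝ (Set.Ici 0) k)
    (hk_mono : StrictMonoOn k (Set.Ici 0))
    (hk0 : k 0 = 0)
    (hg_right : ∀ t ∈ Set.Ici (0:ℝ), 0 ≤ g t ∧ Ginv k (g t) = t)
    :
    (∀ p q : H, rho0 g (Hmul p q) ≤ rho0 g p + rho0 g q) ∧
    (∀ p : H, rho0 g p = 0 ↔ p = He) ∧
    (∀ r p q : H, rho0 g (Hmul (Hinv (Hmul r p)) (Hmul r q)) = rho0 g (Hmul (Hinv p) q)) := by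
  have hle (p : H) {r : ℝ} (hr : 0 ≤ r) := rho0_le_iff (p := p) hk_mono hg_right hr
  refine ⟨fun p q => ?_, fun p => ?_, fun r p q => by rw [Hinv_Hmul_Hmul_left]⟩
  · have hα := rho0_nonneg (g := g) p
    have hβ := rho0_nonneg (g := g) q
    obtain ⟨hp₁, hp₂⟩ := (hle p hα).1 le_rfl
    obtain ⟨hq₁, hq₂⟩ := (hle q hβ).1 le_rfl
    refine (hle _ (add_nonneg hα hβ)).2 ⟨(enorm2_add_le p.1 q.1).trans (add_le_add hp₁ hq₁), ?_⟩
    calc |(Hmul p q).2| ≤ |p.2| + |q.2| + 2 * (enorm2 p.1 * enorm2 q.1) := abs_Hmul_snd_le p q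
      _ ≤ Ginv k (rho0 g p) + Ginv k (rho0 g q) + 2 * (rho0 g p * rho0 g q) := by
        gcongr; exact enorm2_nonneg _
      _ ≤ Ginv k (rho0 g p + rho0 g q) := Ginv_add_add_le hk_conv hk0 hα hβ
  · rw [← (rho0_nonneg p).ge_iff_eq', hle p le_rfl, Ginv_zero hk0, enorm2_le_zero_iff,
      abs_nonpos_iff]
    exact (Prod.ext_iff (y := He)).symm

/-- Kirchheim–Magnani, existence part: ρ₀ is subadditive for the
Heisenberg operation, vanishes exactly at the identity, and hence
ρ(p,q) := ρ₀(p⁻¹·q) is a left-invariant distance on H(1). -/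
theorem rho0_gauge
(k g : ℝ → ℝ)
    (hk_conv : ConvexOn ℝ (Set.Ici 0) k)
    (hk_mono : StrictMonoOn k (Set.Ici 0))
    (hk_cont : ContinuousOn k (Set.Ici 0))
    (hk0 : k 0 = 0)
    (hk_nonneg : ∀ t ∈ Set.Ici (0:ℝ), 0 ≤ k t)
    (hg_left : ∀ s ∈ Set.Ici (0:ℝ), g (Ginv k s) = s)
    (hg_right : ∀ t ∈ Set.Ici (0:ℝ), 0 ≤ g t ∧ Ginv k (g t) = t)
    :
    (∀ p q : H, rho0 g (Hmul p q) ≤ rho0 g p + rho0 g q) ∧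
    (∀ p : H, rho0 g p = 0 ↔ p = He) ∧
    (∀ r p q : H, rho0 g (Hmul (Hinv (Hmul r p)) (Hmul r q)) = rho0 g (Hmul (Hinv p) q)) :=
  rho0_gauge_general k g hk_conv hk_mono hk0 hg_right
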